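/- arXiv:cs/0506072 — 5 statements merged into one kernel-verified Lean document; each statement's English description precedes it below -/
import Mathlib

section
/- Let N, K be integers with K ≥ N/2 + 1 and K ≤ N+1. Consider minimizing e = e_1 + 2e_2 over nonnegative reals e_1, e_2 with e_1 + e_2 ≤ N and N − e_1/2 − (3/4)e_2 ≤ K − 1. The minimum is e* = 2(N − K + 1), attained at e_1 = 2(N−K+1), e_2 = 0. -/
/-- For `N/2 + 1 ≤ K ≤ N + 1`: minimizing `e = e₁ + 2e₂` over nonnegative reals with
`e₁ + e₂ ≤ N` and `N − e₁/2 − (3/4)e₂ ≤ K − 1`, the minimum is `2(N − K + 1)`,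
attained at `e₁ = 2(N − K + 1)`, `e₂ = 0`. -/
theorem bec_radius_high_rate (N K : ℤ) (hK1 : (K : ℝ) ≥ (N : ℝ) / 2 + 1)
    (hK2 : (K : ℝ) ≤ (N : ℝ) + 1) :
    (0 ≤ (2 : ℝ) * (N - K + 1) ∧ (0 : ℝ) ≤ 0 ∧
      (2 : ℝ) * (N - K + 1) + 0 ≤ (N : ℝ) ∧
      (N : ℝ) - (2 * ((N : ℝ) - K + 1)) / 2 - (3 / 4) * 0 ≤ (K : ℝ) - 1 ∧
      (2 : ℝ) * (N - K + 1) + 2 * 0 = 2 * ((N : ℝ) - K + 1)) ∧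
    ∀ e₁ e₂ : ℝ, 0 ≤ e₁ → 0 ≤ e₂ → e₁ + e₂ ≤ (N : ℝ) →
      (N : ℝ) - e₁ / 2 - (3 / 4) * e₂ ≤ (K : ℝ) - 1 →
      2 * ((N : ℝ) - K + 1) ≤ e₁ + 2 * e₂ := by
  constructor
  · refine ⟨by push_cast; linarith, le_refl _, by push_cast; linarith, by push_cast; linarith, by push_cast; ring⟩
  · intro e₁ e₂ h1 h2 h3 h4
    push_cast
    nlinarith
end

section
/- Let N, K be integers with N/4 + 1 ≤ K ≤ N/2 + 1. Consider minimizing e = e_1 + 2e_2 over nonnegative reals e_1, e_2 with e_1 + e_2 ≤ N and N − e_1/2 − (3/4)e_2 ≤ K − 1. The minimum is e* = 3N − 4(K−1), attained at e_1 = 4(K−1) − N, e_2 = 2(N − 2(K−1)); moreover e* ≤ 2N and e* ≥ 2(N − K + 1). -/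
/-- For `N/4 + 1 ≤ K ≤ N/2 + 1`: minimizing `e = e₁ + 2e₂` over nonnegative reals with
`e₁ + e₂ ≤ N` and `N − e₁/2 − (3/4)e₂ ≤ K − 1`, the minimum is `3N − 4(K−1)`, attained at
`e₁ = 4(K−1) − N`, `e₂ = 2(N − 2(K−1))`; moreover `3N − 4(K−1) ≤ 2N` and
`3N − 4(K−1) ≥ 2(N − K + 1)`. -/
theorem bec_radius_low_rate (N K : ℤ) (hK1 : (N : ℝ) / 4 + 1 ≤ (K : ℝ))
    (hK2 : (K : ℝ) ≤ (N : ℝ) / 2 + 1) :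
    (0 ≤ (4 : ℝ) * ((K : ℝ) - 1) - N ∧ 0 ≤ (2 : ℝ) * ((N : ℝ) - 2 * ((K : ℝ) - 1)) ∧
      ((4 : ℝ) * ((K : ℝ) - 1) - N) + 2 * ((N : ℝ) - 2 * ((K : ℝ) - 1)) ≤ (N : ℝ) ∧
      (N : ℝ) - ((4 : ℝ) * ((K : ℝ) - 1) - N) / 2
        - (3 / 4) * (2 * ((N : ℝ) - 2 * ((K : ℝ) - 1))) ≤ (K : ℝ) - 1 ∧
      ((4 : ℝ) * ((K : ℝ) - 1) - N) + 2 * (2 * ((N : ℝ) - 2 * ((K : ℝ) - 1)))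
        = 3 * (N : ℝ) - 4 * ((K : ℝ) - 1)) ∧
    (∀ e₁ e₂ : ℝ, 0 ≤ e₁ → 0 ≤ e₂ → e₁ + e₂ ≤ (N : ℝ) →
      (N : ℝ) - e₁ / 2 - (3 / 4) * e₂ ≤ (K : ℝ) - 1 →
      3 * (N : ℝ) - 4 * ((K : ℝ) - 1) ≤ e₁ + 2 * e₂) ∧
    3 * (N : ℝ) - 4 * ((K : ℝ) - 1) ≤ 2 * (N : ℝ) ∧
    2 * ((N : ℝ) - (K : ℝ) + 1) ≤ 3 * (N : ℝ) - 4 * ((K : ℝ) - 1) := by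
  refine ⟨⟨by linarith, by linarith, by linarith, by linarith, by ring⟩,
    fun e₁ e₂ h1 h2 h3 h4 => by linarith, by linarith, by linarith⟩
end

section
/- Let N, K, m be positive integers. If N ≥ (K−1)(1+m), equivalently the code rate R = K/N satisfies R ≤ 1/(1+m) + 1/N, then with equal multiplicities m_0 = m_1 (t = 1), the sufficient condition (N−e) + e·t ≥ √((K−1)N(1+m·t²)) holds for every number of errors e with 0 ≤ e ≤ N; hence ASD corrects all error patterns of the 1-bit flipped BSC. -/
/-- If `N ≥ (K−1)(1+m)` then with `t = 1` (equal multiplicities) the sufficient condition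
`(N−e) + e·t ≥ √((K−1)N(1+m t²))` holds for every `0 ≤ e ≤ N`: ASD corrects all error
patterns of the 1-bit flipped BSC. -/
theorem low_rate_corrects_all (N K m : ℕ) (hN : 0 < N) (hK : 0 < K) (hm : 0 < m)
    (h : (N : ℝ) ≥ ((K : ℝ) - 1) * (1 + (m : ℝ))) :
    ∀ e : ℝ, 0 ≤ e → e ≤ (N : ℝ) →
      ((N : ℝ) - e) + e * 1 ≥
        Real.sqrt (((K : ℝ) - 1) * (N : ℝ) * (1 + (m : ℝ) * (1 : ℝ) ^ 2)) := by
  intro e _ _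
  have hNpos : (0:ℝ) < N := by exact_mod_cast hN
  have hK1 : (0:ℝ) ≤ (K:ℝ) - 1 := by
    have : (1:ℝ) ≤ K := by exact_mod_cast hK
    linarith
  have hle : ((K : ℝ) - 1) * (N : ℝ) * (1 + (m : ℝ) * (1 : ℝ) ^ 2) ≤ (N:ℝ)^2 := by
    have : ((K:ℝ)-1) * (1 + (m:ℝ)) ≤ N := h
    nlinarith
  have := Real.sqrt_le_sqrt hle
  have hs : Real.sqrt ((N:ℝ)^2) = N := Real.sqrt_sq hNpos.le
  linarith [this, hs.le, hs.ge]
end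

section
/- For the function d(t) = (N − √(N(K−1)(1 + m t²)))/(1 − t) on [0, 1), under the assumptions N > K − 1 ≥ 1, m ≥ 2, and N < (K−1)(1+m), if x_0 = (−m(K−1)+√Δ)/(m²(K−1)−mN) with Δ = (m(K−1))² + (N−K+1)(m²(K−1)−mN) lies in (0,1), then the maximum of d over [0,1) equals N·m/(m + 1/x_0), attained at t = x_0. -/
/-- Under `N > K − 1 ≥ 1`, `m ≥ 2`, `N < (K−1)(1+m)`, if
`x₀ = (−m(K−1)+√Δ)/(m²(K−1)−mN)` with `Δ = (m(K−1))² + (N−K+1)(m²(K−1)−mN)` lies in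
`(0,1)`, then the maximum of `d(t) = (N − √(N(K−1)(1+m t²)))/(1−t)` over `[0,1)` equals
`N m/(m + 1/x₀)`, attained at `t = x₀`. -/
theorem optimal_radius (N K m : ℕ) (hm : 2 ≤ m) (hK : 1 ≤ (K : ℝ) - 1)
    (hNK : (K : ℝ) - 1 < N) (hrate : (N : ℝ) < ((K : ℝ) - 1) * (1 + (m : ℝ)))
    (Δ x₀ : ℝ)
    (hΔ : Δ = ((m : ℝ) * ((K : ℝ) - 1)) ^ 2 +
        ((N : ℝ) - K + 1) * ((m : ℝ) ^ 2 * ((K : ℝ) - 1) - (m : ℝ) * N))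
    (hx₀ : x₀ = (-((m : ℝ) * ((K : ℝ) - 1)) + Real.sqrt Δ) /
        ((m : ℝ) ^ 2 * ((K : ℝ) - 1) - (m : ℝ) * N))
    (hx₀0 : 0 < x₀) (hx₀1 : x₀ < 1)
    (d : ℝ → ℝ)
    (hd : ∀ t, d t = ((N : ℝ) - Real.sqrt ((N : ℝ) * ((K : ℝ) - 1) *
        (1 + (m : ℝ) * t ^ 2))) / (1 - t)) :
    (∀ t ∈ Set.Ico (0 : ℝ) 1, d t ≤ (N : ℝ) * (m : ℝ) / ((m : ℝ) + 1 / x₀)) ∧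
    d x₀ = (N : ℝ) * (m : ℝ) / ((m : ℝ) + 1 / x₀) := by
  set B : ℝ := (K : ℝ) - 1 with hBdef
  have hm' : (2:ℝ) ≤ (m:ℝ) := by exact_mod_cast hm
  have hB0 : (0:ℝ) < B := by linarith
  have hN0 : (0:ℝ) < N := by linarith
  have hΔ' : Δ = (m:ℝ) * N * ((1 + m) * B - N) := by rw [hΔ]; ring
  have hΔpos : 0 < Δ := by
    rw [hΔ']
    have h1 : (0:ℝ) < (1 + (m:ℝ)) * B - N := by nlinarith
    positivity
  have ha0 : (m:ℝ) ^ 2 * B - (m:ℝ) * N ≠ 0 := by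
    intro h
    rw [h, div_zero] at hx₀
    linarith
  have h1 : x₀ * ((m:ℝ) ^ 2 * B - (m:ℝ) * N) = -((m:ℝ) * B) + Real.sqrt Δ := by
    rw [hx₀]; exact div_mul_cancel₀ _ ha0
  have h2 : (x₀ * ((m:ℝ) ^ 2 * B - (m:ℝ) * N) + (m:ℝ) * B) ^ 2
      = (m:ℝ) * N * ((1 + m) * B - N) := by
    rw [h1, show -((m:ℝ) * B) + Real.sqrt Δ + (m:ℝ) * B = Real.sqrt Δ by ring,
      Real.sq_sqrt hΔpos.le, hΔ']
  have h4 : ((m:ℝ) ^ 2 * B - (m:ℝ) * N) *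
      (((m:ℝ) ^ 2 * B - (m:ℝ) * N) * x₀ ^ 2 + 2 * (m:ℝ) * B * x₀ + (B - (N:ℝ))) = 0 := by
    linear_combination h2
  have h5 : ((m:ℝ) ^ 2 * B - (m:ℝ) * N) * x₀ ^ 2 + 2 * (m:ℝ) * B * x₀ + (B - (N:ℝ)) = 0 :=
    (mul_eq_zero.mp h4).resolve_left ha0
  -- the key tangency equation
  have hE : B * ((m:ℝ) * x₀ + 1) ^ 2 = (N:ℝ) * (1 + (m:ℝ) * x₀ ^ 2) := by
    linear_combination h5
  have hc0 : (0:ℝ) < (m:ℝ) * x₀ + 1 := by positivity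
  have hM : (N:ℝ) * m / ((m:ℝ) + 1 / x₀) = (N:ℝ) * m * x₀ / ((m:ℝ) * x₀ + 1) := by
    rw [div_eq_div_iff (by positivity) hc0.ne']
    field_simp
  constructor
  · intro t ht
    obtain ⟨ht0, ht1⟩ := ht
    have h1t : 0 < 1 - t := by linarith
    have key : ((N:ℝ) * (1 + (m:ℝ) * x₀ * t)) ^ 2
        ≤ (N:ℝ) * B * (1 + (m:ℝ) * t ^ 2) * ((m:ℝ) * x₀ + 1) ^ 2 := by
      have e : (N:ℝ) * B * (1 + (m:ℝ) * t ^ 2) * ((m:ℝ) * x₀ + 1) ^ 2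
          - ((N:ℝ) * (1 + (m:ℝ) * x₀ * t)) ^ 2
          = ((N:ℝ) * (1 + (m:ℝ) * t ^ 2)) *
            (B * ((m:ℝ) * x₀ + 1) ^ 2 - (N:ℝ) * (1 + (m:ℝ) * x₀ ^ 2))
            + (N:ℝ) ^ 2 * (m:ℝ) * (t - x₀) ^ 2 := by ring
      have h10 : B * ((m:ℝ) * x₀ + 1) ^ 2 - (N:ℝ) * (1 + (m:ℝ) * x₀ ^ 2) = 0 := by
        linarith [hE]
      rw [h10, mul_zero, zero_add] at e
      have h9 : (0:ℝ) ≤ (N:ℝ) ^ 2 * (m:ℝ) * (t - x₀) ^ 2 := by positivity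
      linarith
    have hlb : (N:ℝ) * (1 + (m:ℝ) * x₀ * t) / ((m:ℝ) * x₀ + 1) ≤
        Real.sqrt ((N:ℝ) * B * (1 + (m:ℝ) * t ^ 2)) := by
      rw [Real.le_sqrt (by positivity) (by positivity), div_pow,
        div_le_iff₀ (by positivity)]
      exact key
    have h12 : (N:ℝ) * (1 + (m:ℝ) * x₀ * t) ≤
        Real.sqrt ((N:ℝ) * B * (1 + (m:ℝ) * t ^ 2)) * ((m:ℝ) * x₀ + 1) := by
      have := mul_le_mul_of_nonneg_right hlb hc0.le
      rwa [div_mul_cancel₀ _ (ne_of_gt hc0)] at this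
    rw [hd t, hM, div_le_div_iff₀ h1t hc0]
    nlinarith [h12]
  · have hsq_eq : (N:ℝ) * B * (1 + (m:ℝ) * x₀ ^ 2)
        = ((N:ℝ) * (1 + (m:ℝ) * x₀ ^ 2) / ((m:ℝ) * x₀ + 1)) ^ 2 := by
      rw [div_pow, eq_div_iff (by positivity)]
      linear_combination ((N:ℝ) * (1 + (m:ℝ) * x₀ ^ 2)) * hE
    have hs : Real.sqrt ((N:ℝ) * B * (1 + (m:ℝ) * x₀ ^ 2)) =
        (N:ℝ) * (1 + (m:ℝ) * x₀ ^ 2) / ((m:ℝ) * x₀ + 1) := by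
      rw [hsq_eq]
      exact Real.sqrt_sq (by positivity)
    rw [hd x₀, hs, hM, div_eq_div_iff (by linarith : (0:ℝ) < 1 - x₀).ne' hc0.ne']
    field_simp
    ring
end

section
/- Splitting a symbol containing k ≥ 3 bit errors into one symbol with 2 bit errors and one symbol with k − 2 bit errors does not increase the score of the 1-bit-neighbor multiplicity assignment; therefore the score-minimizing error pattern for a fixed number of flipped bits contains only symbols with at most 2 bit errors. -/
/-- With per-symbol score contribution `M` for 0 errors, `tM` for exactly 1 error
(`0 ≤ t ≤ 1`), and `0` for ≥ 2 errors: splitting a symbol with `k ≥ 3` bit errors into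
one symbol with 2 errors and one with `k − 2` errors (using up an error-free symbol)
does not increase the score. -/
theorem splitting_does_not_increase_score (M t : ℝ) (hM : 0 ≤ M) (ht0 : 0 ≤ t)
    (ht1 : t ≤ 1) (k : ℕ) (hk : 3 ≤ k) :
    (fun n : ℕ => if n = 0 then M else if n = 1 then t * M else 0) 2 +
      (fun n : ℕ => if n = 0 then M else if n = 1 then t * M else 0) (k - 2) ≤
    (fun n : ℕ => if n = 0 then M else if n = 1 then t * M else 0) k +
      (fun n : ℕ => if n = 0 then M else if n = 1 then t * M else 0) 0 := by
  simp only
  have hk0 : k ≠ 0 := by omega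
  have hk1 : k ≠ 1 := by omega
  simp [hk0, hk1]
  split_ifs with h1 h2 <;> nlinarith
end
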